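/- arXiv:2306.07645 — 2 statements merged into one kernel-verified Lean document; each statement's English description precedes it below -/
import Mathlib

section
/- Let κ ≥ 0 and L ≥ 1. There exists a constant C = C(κ) such that the following holds. Let h⁽¹⁾, h⁽²⁾ : ℤ × ℤ → ℂ be finitely supported, suppose h⁽¹⁾(k,k') = 0 whenever |k − k'| > L, and let h(k,k'') = Σ_{k'} h⁽¹⁾(k,k')·h⁽²⁾(k',k''). Then ( Σ_{(k,k'')∈ℤ²} (1 + |k−k''|/L)^{2κ} |h(k,k'')|² )^{1/2} ≤ C · ‖h⁽¹⁾‖_{ℓ²→ℓ²} · ( Σ_{(k',k'')∈ℤ²} (1 + |k'−k''|/L)^{2κ} |h⁽²⁾(k',k'')|² )^{1/2}, where ‖h⁽¹⁾‖_{ℓ²→ℓ²} is the operator norm of the matrix h⁽¹⁾ acting on ℓ²(ℤ). -/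
open Finset

private lemma tsum_swap_aux (F : ℤ × ℤ → ℝ) (hF : Summable F)
    (hsec : ∀ b : ℤ, Summable fun a : ℤ => F (a, b)) :
    ∑' p : ℤ × ℤ, F p = ∑' b : ℤ, ∑' a : ℤ, F (a, b) := by
  rw [← (Equiv.prodComm ℤ ℤ).tsum_eq F]
  have hG : Summable fun q : ℤ × ℤ => F (q.2, q.1) := hF.prod_symm
  calc ∑' q : ℤ × ℤ, F (Equiv.prodComm ℤ ℤ q) = ∑' q : ℤ × ℤ, F (q.2, q.1) := by
        simp [Equiv.prodComm_apply, Prod.swap]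
    _ = ∑' b, ∑' a, F (a, b) := Summable.tsum_prod' hG (fun b => hsec b)

private lemma main_sq (κ : ℝ) (hκ : 0 ≤ κ) (L : ℝ) (hL : 1 ≤ L)
    (h₁ h₂ : ℤ × ℤ → ℂ) (hfin₁ : (Function.support h₁).Finite)
    (hfin₂ : (Function.support h₂).Finite)
    (hband : ∀ p : ℤ × ℤ, L < (|p.1 - p.2| : ℝ) → h₁ p = 0)
    (C₁ : ℝ) (hC₁ : 0 ≤ C₁)
    (hop : ∀ a : ℤ → ℂ, Summable (fun k : ℤ => ‖a k‖ ^ 2) →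
      Real.sqrt (∑' k : ℤ, ‖∑' k' : ℤ, h₁ (k, k') * a k'‖ ^ 2) ≤
        C₁ * Real.sqrt (∑' k : ℤ, ‖a k‖ ^ 2)) :
    (∑' p : ℤ × ℤ, (1 + (|p.1 - p.2| : ℝ) / L) ^ (2 * κ) *
        ‖∑' k' : ℤ, h₁ (p.1, k') * h₂ (k', p.2)‖ ^ 2)
      ≤ (4 * (2:ℝ) ^ (2 * κ) * C₁) ^ 2 *
        ∑' p : ℤ × ℤ, (1 + (|p.1 - p.2| : ℝ) / L) ^ (2 * κ) * ‖h₂ p‖ ^ 2 := by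
  classical
  have hL0 : (0:ℝ) < L := lt_of_lt_of_le one_pos hL
  -- the base weight
  set w₀ : ℤ × ℤ → ℝ := fun p => 1 + (|p.1 - p.2| : ℝ) / L with hw₀def
  have hw₀app : ∀ p : ℤ × ℤ, w₀ p = 1 + (|p.1 - p.2| : ℝ) / L := fun p => rfl
  have hw₀1 : ∀ p, (1:ℝ) ≤ w₀ p := by
    intro p
    rw [hw₀app]
    have : (0:ℝ) ≤ (|p.1 - p.2| : ℝ) / L := by positivity
    linarith
  have hw₀0 : ∀ p, (0:ℝ) ≤ w₀ p := fun p => le_trans zero_le_one (hw₀1 p)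
  have hwnn : ∀ p, (0:ℝ) ≤ w₀ p ^ (2 * κ) := fun p => Real.rpow_nonneg (hw₀0 p) _
  -- dyadic index
  set jf : ℤ × ℤ → ℕ := fun p => ⌊Real.logb 2 (w₀ p)⌋₊ with hjfdef
  have hlow : ∀ p, (2:ℝ) ^ (jf p : ℝ) ≤ w₀ p := by
    intro p
    have h1 : (0:ℝ) ≤ Real.logb 2 (w₀ p) := Real.logb_nonneg one_lt_two (hw₀1 p)
    calc (2:ℝ) ^ ((jf p : ℕ) : ℝ) ≤ (2:ℝ) ^ Real.logb 2 (w₀ p) :=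
          Real.rpow_le_rpow_of_exponent_le one_le_two (Nat.floor_le h1)
      _ = w₀ p := Real.rpow_logb two_pos (by norm_num) (lt_of_lt_of_le one_pos (hw₀1 p))
  have hhigh : ∀ p, w₀ p < (2:ℝ) ^ ((jf p : ℝ) + 1) := by
    intro p
    calc w₀ p = (2:ℝ) ^ Real.logb 2 (w₀ p) :=
          (Real.rpow_logb two_pos (by norm_num) (lt_of_lt_of_le one_pos (hw₀1 p))).symm
      _ < _ := Real.rpow_lt_rpow_of_exponent_lt one_lt_two (Nat.lt_floor_add_one _)
  -- support finsets
  set s₁ : Finset (ℤ × ℤ) := hfin₁.toFinset with hs₁def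
  set s₂ : Finset (ℤ × ℤ) := hfin₂.toFinset with hs₂def
  have hm₁ : ∀ p, h₁ p ≠ 0 → p ∈ s₁ := fun p hp => hfin₁.mem_toFinset.2 hp
  have hm₂ : ∀ p, h₂ p ≠ 0 → p ∈ s₂ := fun p hp => hfin₂.mem_toFinset.2 hp
  set A : Finset ℤ := s₁.image Prod.fst with hAdef
  set B : Finset ℤ := s₂.image Prod.snd with hBdef
  set Mid : Finset ℤ := s₁.image Prod.snd with hMiddef
  set Mid2 : Finset ℤ := s₂.image Prod.fst with hMid2def
  have hA : ∀ (x k' : ℤ), x ∉ A → h₁ (x, k') = 0 := by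
    intro x k' hx
    by_contra hne
    exact hx (Finset.mem_image_of_mem Prod.fst (hm₁ _ hne))
  have hMid : ∀ (x k' : ℤ), k' ∉ Mid → h₁ (x, k') = 0 := by
    intro x k' hk'
    by_contra hne
    exact hk' (Finset.mem_image_of_mem Prod.snd (hm₁ _ hne))
  have hB : ∀ (k' y : ℤ), y ∉ B → h₂ (k', y) = 0 := by
    intro k' y hy
    by_contra hne
    exact hy (Finset.mem_image_of_mem Prod.snd (hm₂ _ hne))
  have hMid2 : ∀ (k' y : ℤ), k' ∉ Mid2 → h₂ (k', y) = 0 := by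
    intro k' y hk'
    by_contra hne
    exact hk' (Finset.mem_image_of_mem Prod.fst (hm₂ _ hne))
  -- dyadic pieces of h₂
  set J : ℕ := s₂.sup jf + 1 with hJdef
  set g : ℕ → ℤ × ℤ → ℂ := fun j p => if jf p = j then h₂ p else 0 with hgdef
  have hgsum : ∀ p, ∑ j ∈ Finset.range J, g j p = h₂ p := by
    intro p
    by_cases hp : h₂ p = 0
    · simp [hgdef, hp]
    · have hpJ : jf p ∈ Finset.range J := mem_range.2 (Nat.lt_succ_of_le (Finset.le_sup (hm₂ p hp)))
      rw [hgdef]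
      simp only []
      rw [Finset.sum_ite_eq]
      simp [hpJ]
  -- compositions
  set Hc : ℤ × ℤ → ℂ := fun p => ∑' k', h₁ (p.1, k') * h₂ (k', p.2) with hHcdef
  set F : ℕ → ℤ × ℤ → ℂ := fun j p => ∑' k', h₁ (p.1, k') * g j (k', p.2) with hFdef
  have hS1 : ∀ (x : ℤ) (φ : ℤ → ℂ), Summable fun k' => h₁ (x, k') * φ k' := by
    intro x φ
    apply summable_of_ne_finset_zero (s := Mid)
    intro k' hk'
    rw [hMid x k' hk']
    simp
  have hHcF : ∀ p, Hc p = ∑ j ∈ Finset.range J, F j p := by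
    intro p
    have heq : (fun k' => h₁ (p.1, k') * h₂ (k', p.2))
        = fun k' => ∑ j ∈ Finset.range J, h₁ (p.1, k') * g j (k', p.2) := by
      funext k'
      rw [← Finset.mul_sum, hgsum]
    rw [hHcdef, hFdef]
    simp only []
    rw [heq, Summable.tsum_finsetSum (fun j _ => hS1 p.1 _)]
  -- support of the pieces
  have hgsupp : ∀ j p, g j p ≠ 0 → h₂ p ≠ 0 ∧ jf p = j := by
    intro j p hg
    rw [hgdef] at hg
    simp only [] at hg
    by_cases h : jf p = j
    · refine ⟨?_, h⟩
      intro h2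
      rw [h2] at hg
      simp at hg
    · simp [h] at hg
  have hFzero : ∀ j p, (p.1 ∉ A ∨ p.2 ∉ B) → F j p = 0 := by
    intro j p hp
    have hz : ∀ k', h₁ (p.1, k') * g j (k', p.2) = 0 := by
      intro k'
      rcases hp with hp | hp
      · rw [hA p.1 k' hp, zero_mul]
      · have h0 : h₂ (k', p.2) = 0 := hB k' p.2 hp
        have hg0 : g j (k', p.2) = 0 := by rw [hgdef]; simp [h0]
        rw [hg0, mul_zero]
    rw [hFdef]
    simp only []
    rw [show (fun k' => h₁ (p.1, k') * g j (k', p.2)) = (fun _ => (0:ℂ)) from funext hz,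
      tsum_zero]
  have hHczero : ∀ p : ℤ × ℤ, (p.1 ∉ A ∨ p.2 ∉ B) → Hc p = 0 := by
    intro p hp
    have hz : ∀ k', h₁ (p.1, k') * h₂ (k', p.2) = 0 := by
      intro k'
      rcases hp with hp | hp
      · rw [hA p.1 k' hp, zero_mul]
      · rw [hB k' p.2 hp, mul_zero]
    rw [hHcdef]
    simp only []
    rw [show (fun k' => h₁ (p.1, k') * h₂ (k', p.2)) = (fun _ => (0:ℂ)) from funext hz,
      tsum_zero]
  -- support of a dyadic piece of the composition: two-sided dyadic bounds on the weight
  have h2exp : ∀ x : ℝ, (2:ℝ) * (2:ℝ) ^ (x + 1) = (2:ℝ) ^ (x + 2) := by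
    intro x
    have h4 : (2:ℝ) ^ (2:ℝ) = 4 := by
      rw [show (2:ℝ) = ((2:ℕ):ℝ) from by norm_num, Real.rpow_natCast]
      norm_num
    rw [Real.rpow_add two_pos x 1, Real.rpow_add two_pos x 2, Real.rpow_one, h4]
    ring
  have hFsupp : ∀ (j : ℕ) (p : ℤ × ℤ), F j p ≠ 0 →
      (2:ℝ) ^ (j:ℝ) ≤ 2 * w₀ p ∧ w₀ p < (2:ℝ) ^ ((j:ℝ) + 2) := by
    intro j p hF0
    have hex : ∃ k', h₁ (p.1, k') * g j (k', p.2) ≠ 0 := by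
      by_contra hno
      push_neg at hno
      apply hF0
      rw [hFdef]
      simp only []
      rw [show (fun k' => h₁ (p.1, k') * g j (k', p.2)) = (fun _ => (0:ℂ)) from funext hno,
        tsum_zero]
    obtain ⟨k', hk'⟩ := hex
    have h1ne : h₁ (p.1, k') ≠ 0 := fun h => hk' (by rw [h, zero_mul])
    have hgne : g j (k', p.2) ≠ 0 := fun h => hk' (by rw [h, mul_zero])
    obtain ⟨h2ne, hjeq⟩ := hgsupp j (k', p.2) hgne
    have hb : |(p.1:ℝ) - (k':ℝ)| ≤ L := by
      by_contra hbl
      push_neg at hbl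
      exact h1ne (hband (p.1, k') hbl)
    have habs1 : |(k':ℝ) - (p.2:ℝ)| ≤ L + |(p.1:ℝ) - (p.2:ℝ)| := by
      have ht := abs_sub_le (k':ℝ) (p.1:ℝ) (p.2:ℝ)
      have h' : |(k':ℝ) - (p.1:ℝ)| = |(p.1:ℝ) - (k':ℝ)| := abs_sub_comm _ _
      linarith
    have habs2 : |(p.1:ℝ) - (p.2:ℝ)| ≤ L + |(k':ℝ) - (p.2:ℝ)| := by
      have ht := abs_sub_le (p.1:ℝ) (k':ℝ) (p.2:ℝ)
      linarith
    have hXnn : (0:ℝ) ≤ |(p.1:ℝ) - (p.2:ℝ)| / L := by positivity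
    have hYnn : (0:ℝ) ≤ |(k':ℝ) - (p.2:ℝ)| / L := by positivity
    have hLL : (L + |(p.1:ℝ) - (p.2:ℝ)|) / L = 1 + |(p.1:ℝ) - (p.2:ℝ)| / L := by
      field_simp
    have hLL2 : (L + |(k':ℝ) - (p.2:ℝ)|) / L = 1 + |(k':ℝ) - (p.2:ℝ)| / L := by
      field_simp
    have hq1 : w₀ (k', p.2) ≤ 2 * w₀ p := by
      rw [hw₀app, hw₀app]
      have hd : |(k':ℝ) - (p.2:ℝ)| / L ≤ (L + |(p.1:ℝ) - (p.2:ℝ)|) / L := by gcongr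
      rw [hLL] at hd
      simp only []
      linarith
    have hq2 : w₀ p ≤ 2 * w₀ (k', p.2) := by
      rw [hw₀app, hw₀app]
      have hd : |(p.1:ℝ) - (p.2:ℝ)| / L ≤ (L + |(k':ℝ) - (p.2:ℝ)|) / L := by gcongr
      rw [hLL2] at hd
      simp only []
      linarith
    constructor
    · have hl := hlow (k', p.2)
      rw [hjeq] at hl
      exact le_trans hl hq1
    · have hh := hhigh (k', p.2)
      rw [hjeq] at hh
      calc w₀ p ≤ 2 * w₀ (k', p.2) := hq2
        _ < 2 * (2:ℝ) ^ ((j:ℝ) + 1) := by linarith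
        _ = _ := h2exp _
  have hcard : ∀ p : ℤ × ℤ, ((Finset.range J).filter (fun j => F j p ≠ 0)).card ≤ 3 := by
    intro p
    have hsub : (Finset.range J).filter (fun j => F j p ≠ 0) ⊆
        Finset.Icc (jf p - 1) (jf p + 1) := by
      intro j hj
      have hFne : F j p ≠ 0 := (Finset.mem_filter.1 hj).2
      obtain ⟨hlo, hhi⟩ := hFsupp j p hFne
      have e1 : (2:ℝ) ^ (j:ℝ) < (2:ℝ) ^ ((jf p:ℝ) + 2) := by
        have hhp := hhigh p
        calc (2:ℝ) ^ (j:ℝ) ≤ 2 * w₀ p := hlo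
          _ < 2 * (2:ℝ) ^ ((jf p:ℝ) + 1) := by linarith
          _ = _ := h2exp _
      have e1' : (j:ℝ) < (jf p:ℝ) + 2 := (Real.rpow_lt_rpow_left_iff one_lt_two).1 e1
      have e2 : (2:ℝ) ^ ((jf p:ℕ):ℝ) < (2:ℝ) ^ ((j:ℝ) + 2) := lt_of_le_of_lt (hlow p) hhi
      have e2' : ((jf p:ℕ):ℝ) < (j:ℝ) + 2 := (Real.rpow_lt_rpow_left_iff one_lt_two).1 e2
      have j1 : j < jf p + 2 := by exact_mod_cast e1'
      have j2 : jf p < j + 2 := by exact_mod_cast e2'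
      rw [Finset.mem_Icc]
      omega
    have hcc := Finset.card_le_card hsub
    rw [Nat.card_Icc] at hcc
    omega
  have h4R : (2:ℝ) ^ (2:ℝ) = 4 := by
    rw [show (2:ℝ) = ((2:ℕ):ℝ) from by norm_num, Real.rpow_natCast]
    norm_num
  -- weights per dyadic piece
  set cj : ℕ → ℝ := fun j => ((2:ℝ) ^ ((j:ℝ) + 2)) ^ (2 * κ) with hcjdef
  have hcjnn : ∀ j, 0 ≤ cj j := fun j => Real.rpow_nonneg (Real.rpow_nonneg two_pos.le _) _
  -- pointwise finite-overlap Cauchy-Schwarz bound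
  have hptA : ∀ p : ℤ × ℤ, w₀ p ^ (2 * κ) * ‖Hc p‖ ^ 2 ≤
      3 * ∑ j ∈ Finset.range J, cj j * ‖F j p‖ ^ 2 := by
    intro p
    set T : Finset ℕ := (Finset.range J).filter (fun j => F j p ≠ 0) with hTdef
    have hHcT : Hc p = ∑ j ∈ T, F j p := by
      rw [hHcF p]
      exact (Finset.sum_filter_ne_zero _).symm
    have hnorm : ‖Hc p‖ ≤ ∑ j ∈ T, ‖F j p‖ := by
      rw [hHcT]; exact norm_sum_le _ _
    have hsq : ‖Hc p‖ ^ 2 ≤ (∑ j ∈ T, ‖F j p‖) ^ 2 :=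
      pow_le_pow_left₀ (norm_nonneg _) hnorm 2
    have hcs : (∑ j ∈ T, ‖F j p‖) ^ 2 ≤ (T.card : ℝ) * ∑ j ∈ T, ‖F j p‖ ^ 2 :=
      sq_sum_le_card_mul_sum_sq
    have hc3 : (T.card : ℝ) ≤ 3 := by exact_mod_cast hcard p
    have hsnn : (0:ℝ) ≤ ∑ j ∈ T, ‖F j p‖ ^ 2 :=
      Finset.sum_nonneg fun j _ => by positivity
    have h1 : ‖Hc p‖ ^ 2 ≤ 3 * ∑ j ∈ T, ‖F j p‖ ^ 2 := by nlinarith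
    have h2 : ∀ j ∈ T, w₀ p ^ (2 * κ) * ‖F j p‖ ^ 2 ≤ cj j * ‖F j p‖ ^ 2 := by
      intro j hj
      have hFne : F j p ≠ 0 := (Finset.mem_filter.1 hj).2
      have hw : w₀ p ≤ (2:ℝ) ^ ((j:ℝ) + 2) := le_of_lt (hFsupp j p hFne).2
      have hr : w₀ p ^ (2 * κ) ≤ ((2:ℝ) ^ ((j:ℝ) + 2)) ^ (2 * κ) :=
        Real.rpow_le_rpow (hw₀0 p) hw (by linarith)
      exact mul_le_mul_of_nonneg_right hr (by positivity)
    calc w₀ p ^ (2 * κ) * ‖Hc p‖ ^ 2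
        ≤ w₀ p ^ (2 * κ) * (3 * ∑ j ∈ T, ‖F j p‖ ^ 2) :=
          mul_le_mul_of_nonneg_left h1 (hwnn p)
      _ = 3 * ∑ j ∈ T, w₀ p ^ (2 * κ) * ‖F j p‖ ^ 2 := by
          simp only [Finset.mul_sum]
          exact Finset.sum_congr rfl fun j _ => by ring
      _ ≤ 3 * ∑ j ∈ T, cj j * ‖F j p‖ ^ 2 := by
          have := Finset.sum_le_sum h2
          linarith
      _ ≤ 3 * ∑ j ∈ Finset.range J, cj j * ‖F j p‖ ^ 2 := by
          have hsub : T ⊆ Finset.range J := Finset.filter_subset _ _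
          have := Finset.sum_le_sum_of_subset_of_nonneg
            (f := fun j => cj j * ‖F j p‖ ^ 2) hsub
            (fun j _ _ => mul_nonneg (hcjnn j) (by positivity))
          linarith
  -- summability facts
  have hsumW : Summable fun p : ℤ × ℤ => w₀ p ^ (2 * κ) * ‖Hc p‖ ^ 2 := by
    apply summable_of_ne_finset_zero (s := A ×ˢ B)
    intro p hp
    have hz : Hc p = 0 := hHczero p (by rw [Finset.mem_product] at hp; tauto)
    rw [hz]; simp
  have hsumF2 : ∀ j, Summable fun p : ℤ × ℤ => ‖F j p‖ ^ 2 := by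
    intro j
    apply summable_of_ne_finset_zero (s := A ×ˢ B)
    intro p hp
    have hz : F j p = 0 := hFzero j p (by rw [Finset.mem_product] at hp; tauto)
    rw [hz]; simp
  have hsumFw : ∀ j, Summable fun p : ℤ × ℤ => cj j * ‖F j p‖ ^ 2 :=
    fun j => (hsumF2 j).mul_left _
  have hsumRHS : Summable fun p : ℤ × ℤ => 3 * ∑ j ∈ Finset.range J, cj j * ‖F j p‖ ^ 2 := by
    apply Summable.mul_left
    exact summable_sum (fun j _ => hsumFw j)
  have hgz : ∀ j (p : ℤ × ℤ), p ∉ s₂ → g j p = 0 := by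
    intro j p hp
    by_contra hne
    exact hp (hm₂ p (hgsupp j p hne).1)
  have hsumg2 : ∀ j, Summable fun p : ℤ × ℤ => ‖g j p‖ ^ 2 := by
    intro j
    apply summable_of_ne_finset_zero (s := s₂)
    intro p hp
    rw [hgz j p hp]; simp
  have hsumgw : ∀ j, Summable fun p : ℤ × ℤ => w₀ p ^ (2 * κ) * ‖g j p‖ ^ 2 := by
    intro j
    apply summable_of_ne_finset_zero (s := s₂)
    intro p hp
    rw [hgz j p hp]; simp
  have hsumh₂w : Summable fun p : ℤ × ℤ => w₀ p ^ (2 * κ) * ‖h₂ p‖ ^ 2 := by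
    apply summable_of_ne_finset_zero (s := s₂)
    intro p hp
    have hz : h₂ p = 0 := by by_contra hne; exact hp (hm₂ p hne)
    rw [hz]; simp
  -- Step B : reduce to the dyadic pieces
  have hB : (∑' p : ℤ × ℤ, w₀ p ^ (2 * κ) * ‖Hc p‖ ^ 2)
      ≤ 3 * ∑ j ∈ Finset.range J, cj j * ∑' p : ℤ × ℤ, ‖F j p‖ ^ 2 := by
    calc (∑' p : ℤ × ℤ, w₀ p ^ (2 * κ) * ‖Hc p‖ ^ 2)
        ≤ ∑' p : ℤ × ℤ, 3 * ∑ j ∈ Finset.range J, cj j * ‖F j p‖ ^ 2 :=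
          Summable.tsum_le_tsum hptA hsumW hsumRHS
      _ = 3 * ∑' p : ℤ × ℤ, ∑ j ∈ Finset.range J, cj j * ‖F j p‖ ^ 2 := tsum_mul_left
      _ = 3 * ∑ j ∈ Finset.range J, ∑' p : ℤ × ℤ, cj j * ‖F j p‖ ^ 2 := by
          rw [Summable.tsum_finsetSum (fun j _ => hsumFw j)]
      _ = 3 * ∑ j ∈ Finset.range J, cj j * ∑' p : ℤ × ℤ, ‖F j p‖ ^ 2 := by
          congr 1
          exact Finset.sum_congr rfl fun j _ => tsum_mul_left
  -- Step C : operator norm bound on each piece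
  have hopsq : ∀ j : ℕ, (∑' p : ℤ × ℤ, ‖F j p‖ ^ 2) ≤ C₁ ^ 2 * ∑' p : ℤ × ℤ, ‖g j p‖ ^ 2 := by
    intro j
    have hsecF : ∀ b : ℤ, Summable fun a : ℤ => ‖F j (a, b)‖ ^ 2 := by
      intro b
      apply summable_of_ne_finset_zero (s := A)
      intro a ha
      rw [hFzero j (a, b) (Or.inl ha)]; simp
    have hsecg : ∀ b : ℤ, Summable fun a : ℤ => ‖g j (a, b)‖ ^ 2 := by
      intro b
      apply summable_of_ne_finset_zero (s := Mid2)
      intro a ha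
      have hz : g j (a, b) = 0 := by
        by_contra hne
        exact ha (Finset.mem_image_of_mem Prod.fst (hm₂ _ (hgsupp j _ hne).1))
      rw [hz]; simp
    rw [tsum_swap_aux _ (hsumF2 j) hsecF, tsum_swap_aux _ (hsumg2 j) hsecg, ← tsum_mul_left]
    apply Summable.tsum_le_tsum _ ?_ ?_
    · intro k''
      have ha : Summable fun k' : ℤ => ‖g j (k', k'')‖ ^ 2 := hsecg k''
      have hterm' : Real.sqrt (∑' k : ℤ, ‖F j (k, k'')‖ ^ 2)
          ≤ C₁ * Real.sqrt (∑' k' : ℤ, ‖g j (k', k'')‖ ^ 2) :=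
        hop (fun k' => g j (k', k'')) ha
      have h1nn : 0 ≤ ∑' k : ℤ, ‖F j (k, k'')‖ ^ 2 := tsum_nonneg fun _ => by positivity
      have h2nn : 0 ≤ ∑' k' : ℤ, ‖g j (k', k'')‖ ^ 2 := tsum_nonneg fun _ => by positivity
      calc (∑' k : ℤ, ‖F j (k, k'')‖ ^ 2)
          = Real.sqrt (∑' k : ℤ, ‖F j (k, k'')‖ ^ 2) ^ 2 := (Real.sq_sqrt h1nn).symm
        _ ≤ (C₁ * Real.sqrt (∑' k' : ℤ, ‖g j (k', k'')‖ ^ 2)) ^ 2 :=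
            pow_le_pow_left₀ (Real.sqrt_nonneg _) hterm' 2
        _ = C₁ ^ 2 * ∑' k' : ℤ, ‖g j (k', k'')‖ ^ 2 := by
            rw [mul_pow, Real.sq_sqrt h2nn]
    · apply summable_of_ne_finset_zero (s := B)
      intro b hb
      have hz : ∀ k : ℤ, ‖F j (k, b)‖ ^ 2 = 0 := fun k => by
        rw [hFzero j (k, b) (Or.inr hb)]; simp
      rw [show (fun k : ℤ => ‖F j (k, b)‖ ^ 2) = fun _ => (0:ℝ) from funext hz, tsum_zero]
    · apply summable_of_ne_finset_zero (s := B)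
      intro b hb
      have hz : ∀ k' : ℤ, ‖g j (k', b)‖ ^ 2 = 0 := by
        intro k'
        have hz0 : g j (k', b) = 0 := by
          by_contra hne
          exact hb (Finset.mem_image_of_mem Prod.snd (hm₂ _ (hgsupp j _ hne).1))
        rw [hz0]; simp
      rw [show (fun k' : ℤ => ‖g j (k', b)‖ ^ 2) = fun _ => (0:ℝ) from funext hz, tsum_zero,
        mul_zero]
  -- Step D : trade the dyadic constant back for the weight on h₂
  have hD : ∀ j : ℕ, cj j * ∑' p : ℤ × ℤ, ‖g j p‖ ^ 2
      ≤ (4:ℝ) ^ (2 * κ) * ∑' p : ℤ × ℤ, w₀ p ^ (2 * κ) * ‖g j p‖ ^ 2 := by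
    intro j
    rw [← tsum_mul_left, ← tsum_mul_left]
    apply Summable.tsum_le_tsum _ ((hsumg2 j).mul_left _) ((hsumgw j).mul_left _)
    intro p
    by_cases hzg : g j p = 0
    · rw [hzg]; simp
    · obtain ⟨h2ne, hjeq⟩ := hgsupp j p hzg
      have hl := hlow p
      rw [hjeq] at hl
      have h24 : (2:ℝ) ^ ((j:ℝ) + 2) ≤ 4 * w₀ p := by
        rw [Real.rpow_add two_pos, h4R]
        nlinarith [Real.rpow_pos_of_pos two_pos (j:ℝ)]
      have hcb : cj j ≤ (4:ℝ) ^ (2 * κ) * w₀ p ^ (2 * κ) := by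
        rw [hcjdef]
        simp only []
        calc ((2:ℝ) ^ ((j:ℝ) + 2)) ^ (2 * κ) ≤ (4 * w₀ p) ^ (2 * κ) :=
              Real.rpow_le_rpow (Real.rpow_nonneg two_pos.le _) h24 (by linarith)
          _ = (4:ℝ) ^ (2 * κ) * w₀ p ^ (2 * κ) := Real.mul_rpow (by norm_num) (hw₀0 p)
      calc cj j * ‖g j p‖ ^ 2 ≤ ((4:ℝ) ^ (2 * κ) * w₀ p ^ (2 * κ)) * ‖g j p‖ ^ 2 :=
            mul_le_mul_of_nonneg_right hcb (by positivity)
        _ = (4:ℝ) ^ (2 * κ) * (w₀ p ^ (2 * κ) * ‖g j p‖ ^ 2) := by ring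
  -- Step E : reassemble the pieces of h₂
  have hE : ∑ j ∈ Finset.range J, ∑' p : ℤ × ℤ, w₀ p ^ (2 * κ) * ‖g j p‖ ^ 2
      = ∑' p : ℤ × ℤ, w₀ p ^ (2 * κ) * ‖h₂ p‖ ^ 2 := by
    rw [← Summable.tsum_finsetSum (fun j _ => hsumgw j)]
    congr 1
    funext p
    rw [← Finset.mul_sum]
    congr 1
    by_cases hp : h₂ p = 0
    · have hz : ∀ j, g j p = 0 := by intro j; rw [hgdef]; simp [hp]
      simp [hz, hp]
    · have hpJ : jf p ∈ Finset.range J :=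
        mem_range.2 (Nat.lt_succ_of_le (Finset.le_sup (hm₂ p hp)))
      have hgn : ∀ j, ‖g j p‖ ^ 2 = if jf p = j then ‖h₂ p‖ ^ 2 else 0 := by
        intro j
        by_cases h : jf p = j
        · rw [hgdef]; simp [h]
        · rw [hgdef]; simp [h]
      simp_rw [hgn]
      rw [Finset.sum_ite_eq]
      simp [hpJ]
  -- assemble everything
  have h4pow : (4:ℝ) ^ (2 * κ) = (2:ℝ) ^ (2 * κ) * (2:ℝ) ^ (2 * κ) := by
    rw [show (4:ℝ) = 2 * 2 from by norm_num, Real.mul_rpow two_pos.le two_pos.le]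
  have h2knn : (0:ℝ) < (2:ℝ) ^ (2 * κ) := Real.rpow_pos_of_pos two_pos _
  have hterm : ∀ j ∈ Finset.range J, cj j * ∑' p : ℤ × ℤ, ‖F j p‖ ^ 2
      ≤ C₁ ^ 2 * ((4:ℝ) ^ (2 * κ) * ∑' p : ℤ × ℤ, w₀ p ^ (2 * κ) * ‖g j p‖ ^ 2) := by
    intro j _
    calc cj j * ∑' p : ℤ × ℤ, ‖F j p‖ ^ 2
        ≤ cj j * (C₁ ^ 2 * ∑' p : ℤ × ℤ, ‖g j p‖ ^ 2) :=
          mul_le_mul_of_nonneg_left (hopsq j) (hcjnn j)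
      _ = C₁ ^ 2 * (cj j * ∑' p : ℤ × ℤ, ‖g j p‖ ^ 2) := by ring
      _ ≤ _ := mul_le_mul_of_nonneg_left (hD j) (by positivity)
  have hTnn : 0 ≤ ∑' p : ℤ × ℤ, w₀ p ^ (2 * κ) * ‖h₂ p‖ ^ 2 :=
    tsum_nonneg fun p => mul_nonneg (hwnn p) (by positivity)
  have hfinal : (∑' p : ℤ × ℤ, w₀ p ^ (2 * κ) * ‖Hc p‖ ^ 2)
      ≤ (4 * (2:ℝ) ^ (2 * κ) * C₁) ^ 2 * ∑' p : ℤ × ℤ, w₀ p ^ (2 * κ) * ‖h₂ p‖ ^ 2 := by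
    calc (∑' p : ℤ × ℤ, w₀ p ^ (2 * κ) * ‖Hc p‖ ^ 2)
        ≤ 3 * ∑ j ∈ Finset.range J, cj j * ∑' p : ℤ × ℤ, ‖F j p‖ ^ 2 := hB
      _ ≤ 3 * ∑ j ∈ Finset.range J,
            C₁ ^ 2 * ((4:ℝ) ^ (2 * κ) * ∑' p : ℤ × ℤ, w₀ p ^ (2 * κ) * ‖g j p‖ ^ 2) := by
          have := Finset.sum_le_sum hterm
          linarith
      _ = 3 * (C₁ ^ 2 * ((4:ℝ) ^ (2 * κ) *
            ∑ j ∈ Finset.range J, ∑' p : ℤ × ℤ, w₀ p ^ (2 * κ) * ‖g j p‖ ^ 2)) := by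
          rw [← Finset.mul_sum, ← Finset.mul_sum]
      _ = 3 * C₁ ^ 2 * (4:ℝ) ^ (2 * κ) * ∑' p : ℤ × ℤ, w₀ p ^ (2 * κ) * ‖h₂ p‖ ^ 2 := by
          rw [hE]; ring
      _ ≤ (4 * (2:ℝ) ^ (2 * κ) * C₁) ^ 2 * ∑' p : ℤ × ℤ, w₀ p ^ (2 * κ) * ‖h₂ p‖ ^ 2 := by
          apply mul_le_mul_of_nonneg_right _ hTnn
          rw [mul_pow, mul_pow, h4pow]
          nlinarith [mul_pos h2knn h2knn, sq_nonneg C₁,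
            mul_nonneg (mul_pos h2knn h2knn).le (sq_nonneg C₁)]
  exact hfinal

/-- Weighted composition estimate: if `h⁽¹⁾` is supported in
`|k - k'| ≤ L` and has `ℓ² → ℓ²` operator norm at most `C₁`, then the composition
`h(k,k'') = Σ_{k'} h⁽¹⁾(k,k') h⁽²⁾(k',k'')` satisfies the weighted Hilbert–Schmidt bound
with weight `(1 + |k - k''|/L)^κ`. -/
theorem weighted_composition (κ : ℝ) (hκ : 0 ≤ κ) :
    ∃ C : ℝ, 0 < C ∧ ∀ L : ℝ, 1 ≤ L → ∀ h₁ h₂ : ℤ × ℤ → ℂ,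
      (Function.support h₁).Finite → (Function.support h₂).Finite →
      (∀ p : ℤ × ℤ, L < (|p.1 - p.2| : ℝ) → h₁ p = 0) →
      ∀ C₁ : ℝ, 0 ≤ C₁ →
      (∀ a : ℤ → ℂ, Summable (fun k : ℤ => ‖a k‖ ^ 2) →
        Real.sqrt (∑' k : ℤ, ‖∑' k' : ℤ, h₁ (k, k') * a k'‖ ^ 2) ≤
          C₁ * Real.sqrt (∑' k : ℤ, ‖a k‖ ^ 2)) →
      Real.sqrt (∑' p : ℤ × ℤ,
          (1 + (|p.1 - p.2| : ℝ) / L) ^ (2 * κ) *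
            ‖∑' k' : ℤ, h₁ (p.1, k') * h₂ (k', p.2)‖ ^ 2) ≤
        C * C₁ * Real.sqrt (∑' p : ℤ × ℤ,
          (1 + (|p.1 - p.2| : ℝ) / L) ^ (2 * κ) * ‖h₂ p‖ ^ 2) := by
  refine ⟨4 * (2:ℝ) ^ (2 * κ), by positivity, ?_⟩
  intro L hL h₁ h₂ hfin₁ hfin₂ hband C₁ hC₁ hop
  have hmain := main_sq κ hκ L hL h₁ h₂ hfin₁ hfin₂ hband C₁ hC₁ hop
  have hTnn : 0 ≤ ∑' p : ℤ × ℤ, (1 + (|p.1 - p.2| : ℝ) / L) ^ (2 * κ) * ‖h₂ p‖ ^ 2 := by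
    apply tsum_nonneg
    intro p
    have h1 : (0:ℝ) ≤ 1 + (|p.1 - p.2| : ℝ) / L := by positivity
    positivity
  have := Real.sqrt_le_sqrt hmain
  rwa [Real.sqrt_mul (by positivity), Real.sqrt_sq (by positivity)] at this
end

section
/- Let α > 0 and let F, G ⊆ ℤ be finite sets. Let u : ℝ → (ℤ → ℂ) be continuous with u_{k'}(t) = 0 for all t ∈ ℝ and all k' ∉ G, and let Ψ : ℝ → (ℤ → ℂ) be differentiable with Ψ_{k'}(t) = 0 for all t and all k' ∉ F, satisfying for every k ∈ F and every t ∈ ℝ the equation Ψ_k'(t) = −2i · Σ_{(k₁,k₂,k₃) ∈ ℤ³ : k₁−k₂+k₃ = k, k₂ ≠ k₁, k₂ ≠ k₃} e^{it(|k₁|^α − |k₂|^α + |k₃|^α − |k|^α)} · u_{k₁}(t) · conj(u_{k₂}(t)) · Ψ_{k₃}(t) (a finite sum, since u and Ψ are finitely supported). Then the quantity Σ_{k∈F} |Ψ_k(t)|² is constant in t; in particular Σ_k |Ψ_k(t)|² = Σ_k |Ψ_k(0)|² for all t ∈ ℝ. -/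
/-!
Write the equation as `Ψ' = i N Ψ` with `N Ψ_k = -2 Σ e^{itΦ} u_{k₁} conj(u_{k₂}) Ψ_{k₃}`.
Then `d/dt Σ_k |Ψ_k|² = 2 Re Σ_k conj(Ψ_k) · i (NΨ)_k = -2 Im ⟨Ψ, NΨ⟩`, and `⟨Ψ, NΨ⟩` is real because
`N` is Hermitian: the relabelling `(k, k₁, k₂, k₃) ↦ (k₃, k₂, k₁, k)` preserves the interaction
condition `k₁ - k₂ + k₃ = k, k₂ ∉ {k₁, k₃}` and turns each summand of `⟨Ψ, NΨ⟩` into its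
complex conjugate, since it negates the phase `Φ = |k₁|^α - |k₂|^α + |k₃|^α - |k|^α`.
-/

open Complex Finset ComplexConjugate

theorem star_sum_eq_self_of_involutive {β R : Type*} [AddCommMonoid R] [StarAddMonoid R]
    (S : Finset β) {σ : β → β} (hσ : Function.Involutive σ) (hS : ∀ q ∈ S, σ q ∈ S)
    {f : β → R} (hf : ∀ q ∈ S, star (f q) = f (σ q)) :
    star (∑ q ∈ S, f q) = ∑ q ∈ S, f q := by
  rw [star_sum]
  exact sum_nbij' σ σ hS hS (fun q _ => hσ q) (fun q _ => hσ q) hf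

section MassConservation

variable {ι : Type*} (s : Finset ι) {z : ℝ → ι → ℂ}

theorem hasDerivAt_sum_norm_sq {z' : ι → ℂ} {t : ℝ}
    (h : ∀ k ∈ s, HasDerivAt (fun τ => z τ k) (z' k) t) :
    HasDerivAt (fun τ => ∑ k ∈ s, ‖z τ k‖ ^ 2) (∑ k ∈ s, 2 * (z' k * conj (z t k)).re) t := by
  simpa only [Complex.inner] using HasDerivAt.fun_sum fun k hk => (h k hk).norm_sq

theorem sum_norm_sq_eq_of_hasDerivAt_I_mul {N : ℝ → ι → ℂ}
    (hz : ∀ k ∈ s, ∀ t, HasDerivAt (fun τ => z τ k) (I * N t k) t)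
    (hN : ∀ t, (∑ k ∈ s, conj (z t k) * N t k).im = 0) (t : ℝ) :
    ∑ k ∈ s, ‖z t k‖ ^ 2 = ∑ k ∈ s, ‖z 0 k‖ ^ 2 := by
  have hderiv : ∀ t, HasDerivAt (fun τ => ∑ k ∈ s, ‖z τ k‖ ^ 2) 0 t := by
    intro t
    convert hasDerivAt_sum_norm_sq s fun k hk => hz k hk t using 1
    calc (0 : ℝ) = -2 * (∑ k ∈ s, conj (z t k) * N t k).im := by rw [hN t]; ring
      _ = _ := by simp only [im_sum, mul_sum, mul_assoc, I_mul_re, mul_neg, neg_mul, mul_comm (conj _)]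
  exact is_const_of_deriv_eq_zero (fun τ => (hderiv τ).differentiableAt)
    (fun τ => (hderiv τ).deriv) t 0

end MassConservation

noncomputable def resonancePhase (α : ℝ) (k₁ k₂ k₃ k : ℤ) : ℝ :=
  (|k₁| : ℝ) ^ α - (|k₂| : ℝ) ^ α + (|k₃| : ℝ) ^ α - (|k| : ℝ) ^ α

noncomputable def interactionTerm (α : ℝ) (u Ψ : ℝ → ℤ → ℂ) (t : ℝ) (k : ℤ)
    (p : ℤ × ℤ × ℤ) : ℂ :=
  exp (I * t * (resonancePhase α p.1 p.2.1 p.2.2 k : ℂ)) * u t p.1 * conj (u t p.2.1) * Ψ t p.2.2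

def IsInteraction (k : ℤ) (p : ℤ × ℤ × ℤ) : Prop :=
  p.1 - p.2.1 + p.2.2 = k ∧ p.2.1 ≠ p.1 ∧ p.2.1 ≠ p.2.2

instance (k : ℤ) : DecidablePred (IsInteraction k) :=
  fun _ => inferInstanceAs (Decidable (_ ∧ _ ∧ _))

theorem IsInteraction.swap {k k₁ k₂ k₃ : ℤ} (h : IsInteraction k (k₁, k₂, k₃)) :
    IsInteraction k₃ (k₂, k₁, k) := by
  obtain ⟨hsum, h₁, h₃⟩ := h
  refine ⟨?_, ?_, ?_⟩ <;> dsimp only at * <;> omega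

theorem conj_mul_interactionTerm (α : ℝ) (u Ψ : ℝ → ℤ → ℂ) (t : ℝ) (k k₁ k₂ k₃ : ℤ) :
    conj (conj (Ψ t k) * interactionTerm α u Ψ t k (k₁, k₂, k₃)) =
      conj (Ψ t k₃) * interactionTerm α u Ψ t k₃ (k₂, k₁, k) := by
  have hphase : conj (exp (I * t * (resonancePhase α k₁ k₂ k₃ k : ℂ))) =
      exp (I * t * (resonancePhase α k₂ k₁ k k₃ : ℂ)) := by
    rw [← exp_conj]
    congr 1
    simp only [resonancePhase, map_mul, conj_I, conj_ofReal]
    push_cast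
    ring
  simp only [interactionTerm, map_mul, conj_conj, hphase]
  ring

section Supported

variable (α : ℝ) {F G : Finset ℤ} {u Ψ : ℝ → ℤ → ℂ}
  (hu : ∀ t : ℝ, ∀ k ∉ G, u t k = 0) (hΨ : ∀ t : ℝ, ∀ k ∉ F, Ψ t k = 0)
include hu hΨ

theorem support_interactionTerm_subset (t : ℝ) (k : ℤ) :
    Function.support (interactionTerm α u Ψ t k) ⊆ ↑(G ×ˢ G ×ˢ F) := by
  intro p hp
  simp only [coe_product, Set.mem_prod, mem_coe]
  refine ⟨?_, ?_, ?_⟩ <;> by_contra hnot <;> exact hp (by simp [interactionTerm, hu, hΨ, hnot])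

theorem finsum_interactionTerm_eq_sum (t : ℝ) (k : ℤ) :
    ∑ᶠ p ∈ {p | IsInteraction k p}, interactionTerm α u Ψ t k p =
      ∑ p ∈ (G ×ˢ G ×ˢ F).filter (IsInteraction k), interactionTerm α u Ψ t k p := by
  refine finsum_mem_eq_sum_of_subset _ ?_ fun p hp => (mem_filter.mp hp).2
  rintro p ⟨hp, hsupp⟩
  exact mem_filter.mpr ⟨support_interactionTerm_subset α hu hΨ t k hsupp, hp⟩

end Supported

theorem im_sum_conj_mul_interaction_eq_zero (α : ℝ) (F G : Finset ℤ) (u Ψ : ℝ → ℤ → ℂ)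
    (t : ℝ) :
    (∑ k ∈ F, conj (Ψ t k) *
      (-2 * ∑ p ∈ (G ×ˢ G ×ˢ F).filter (IsInteraction k), interactionTerm α u Ψ t k p)).im = 0 := by
  set R := (F ×ˢ G ×ˢ G ×ˢ F).filter fun q => IsInteraction q.1 q.2
  have hR : ∀ q, q ∈ R ↔ q.1 ∈ F ∧ q.2 ∈ (G ×ˢ G ×ˢ F).filter (IsInteraction q.1) := by
    simp [R, and_assoc]
  simp_rw [mul_sum]
  rw [← sum_finset_product' R F _ hR, ← conj_eq_iff_im]
  refine star_sum_eq_self_of_involutive R (σ := fun q => (q.2.2.2, q.2.2.1, q.2.1, q.1))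
    (fun _ => rfl) ?_ ?_
  · rintro ⟨k, k₁, k₂, k₃⟩ hq
    simp only [R, mem_filter, mem_product] at hq ⊢
    exact ⟨by tauto, hq.2.swap⟩
  · rintro ⟨k, k₁, k₂, k₃⟩ -
    change conj _ = _
    rw [mul_left_comm, map_mul, conj_mul_interactionTerm, mul_left_comm, map_neg, map_ofNat]

theorem linearized_flow_conservation_general (α : ℝ) (F G : Finset ℤ)
    (u Ψ : ℝ → ℤ → ℂ)
    (hu_supp : ∀ t : ℝ, ∀ k ∉ G, u t k = 0)
    (hΨ_supp : ∀ t : ℝ, ∀ k ∉ F, Ψ t k = 0)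
    (hode : ∀ k ∈ F, ∀ t : ℝ,
      HasDerivAt (fun s => Ψ s k)
        (-2 * Complex.I *
          ∑ᶠ p ∈ {p : ℤ × ℤ × ℤ | p.1 - p.2.1 + p.2.2 = k ∧ p.2.1 ≠ p.1 ∧ p.2.1 ≠ p.2.2},
            Complex.exp (Complex.I * (t : ℂ) *
                (((|p.1| : ℝ) ^ α - (|p.2.1| : ℝ) ^ α + (|p.2.2| : ℝ) ^ α -
                  (|k| : ℝ) ^ α : ℝ) : ℂ)) *
              u t p.1 * (starRingEnd ℂ) (u t p.2.1) * Ψ t p.2.2) t) :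
    ∀ t : ℝ, ∑ k ∈ F, ‖Ψ t k‖ ^ 2 = ∑ k ∈ F, ‖Ψ 0 k‖ ^ 2 := by
  refine sum_norm_sq_eq_of_hasDerivAt_I_mul F (fun k hk t => (hode k hk t).congr_deriv ?_)
    (im_sum_conj_mul_interaction_eq_zero α F G u Ψ)
  exact (congrArg (-2 * I * ·) (finsum_interactionTerm_eq_sum α hu_supp hΨ_supp t k)).trans
    (by ring)

/-- Unitarity / `L²` conservation for the linearized (random averaging)
flow: if `Ψ` solves `Ψ_k'(t) = -2i Σ_{k₁-k₂+k₃=k, k₂∉{k₁,k₃}} e^{itΦ} u_{k₁} conj(u_{k₂}) Ψ_{k₃}`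
with `u`, `Ψ` supported in the finite frequency sets `G`, `F` respectively, then
`Σ_k |Ψ_k(t)|²` is constant in time. -/
theorem linearized_flow_conservation (α : ℝ) (hα : 0 < α) (F G : Finset ℤ)
    (u Ψ : ℝ → ℤ → ℂ)
    (hu_cont : ∀ k : ℤ, Continuous fun t => u t k)
    (hu_supp : ∀ t : ℝ, ∀ k ∉ G, u t k = 0)
    (hΨ_supp : ∀ t : ℝ, ∀ k ∉ F, Ψ t k = 0)
    (hode : ∀ k ∈ F, ∀ t : ℝ,
      HasDerivAt (fun s => Ψ s k)
        (-2 * Complex.I *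
          ∑ᶠ p ∈ {p : ℤ × ℤ × ℤ | p.1 - p.2.1 + p.2.2 = k ∧ p.2.1 ≠ p.1 ∧ p.2.1 ≠ p.2.2},
            Complex.exp (Complex.I * (t : ℂ) *
                (((|p.1| : ℝ) ^ α - (|p.2.1| : ℝ) ^ α + (|p.2.2| : ℝ) ^ α -
                  (|k| : ℝ) ^ α : ℝ) : ℂ)) *
              u t p.1 * (starRingEnd ℂ) (u t p.2.1) * Ψ t p.2.2) t) :
    ∀ t : ℝ, ∑ k ∈ F, ‖Ψ t k‖ ^ 2 = ∑ k ∈ F, ‖Ψ 0 k‖ ^ 2 :=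
  linearized_flow_conservation_general α F G u Ψ hu_supp hΨ_supp hode
end
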